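/- arXiv:2208.06948 — 3 statements merged into one kernel-verified Lean document; each statement's English description precedes it below -/
import Mathlib

section
/- For jointly distributed random variables X, Y, Z taking values in finite sets, the χ²-conditional mutual information is symmetric in its first and third arguments: I_{χ²}(Y;Z|X) = I_{χ²}(Z;Y|X). -/
open Finset

open Classical in
/-- Probability of an event under a pmf `p` on a finite sample space. -/
noncomputable def pr {Ω : Type*} [Fintype Ω] (p : Ω → ℝ) (E : Ω → Prop) : ℝ :=
  ∑ ω, if E ω then p ω else 0

/-- Conditional distribution of a random variable `Y` given an event `E`. -/
noncomputable def condDist {Ω 𝒴 : Type*} [Fintype Ω] (p : Ω → ℝ) (Y : Ω → 𝒴)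
    (E : Ω → Prop) : 𝒴 → ℝ :=
  fun y => pr p (fun ω => Y ω = y ∧ E ω) / pr p E

/-- Neyman's χ²-divergence `D_{χ²}(P‖Q)`.  (In Lean, `x / 0 = 0`, which realizes
the convention `0²/0 = 0` under absolute continuity.) -/
noncomputable def chiSqDiv {𝒴 : Type*} [Fintype 𝒴] (P Q : 𝒴 → ℝ) : ℝ :=
  ∑ y, (P y - Q y) ^ 2 / Q y

/-- χ²-conditional mutual information `I_{χ²}(Y;Z|X)`. -/
noncomputable def chiSqCMI {Ω 𝒳 𝒴 𝒵 : Type*} [Fintype Ω] [Fintype 𝒳] [Fintype 𝒴]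
    [Fintype 𝒵] (p : Ω → ℝ) (Y : Ω → 𝒴) (Z : Ω → 𝒵) (X : Ω → 𝒳) : ℝ :=
  ∑ x, ∑ z, pr p (fun ω => X ω = x ∧ Z ω = z) *
    chiSqDiv (condDist p Y (fun ω => X ω = x ∧ Z ω = z))
      (condDist p Y (fun ω => X ω = x))

section helpers

variable {Ω : Type*} [Fintype Ω] {p : Ω → ℝ}

lemma pr_nonneg (hp : ∀ ω, 0 ≤ p ω) (E : Ω → Prop) : 0 ≤ pr p E := by
  classical
  unfold pr
  refine Finset.sum_nonneg fun ω _ => ?_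
  split
  · exact hp ω
  · exact le_rfl

lemma pr_mono (hp : ∀ ω, 0 ≤ p ω) {E F : Ω → Prop} (h : ∀ ω, E ω → F ω) :
    pr p E ≤ pr p F := by
  classical
  unfold pr
  refine Finset.sum_le_sum fun ω _ => ?_
  by_cases hE : E ω
  · simp [hE, h ω hE]
  · simp only [hE, if_false]
    split
    · exact hp ω
    · exact le_refl 0

lemma pr_congr {E F : Ω → Prop} (h : ∀ ω, E ω ↔ F ω) : pr p E = pr p F := by
  classical
  unfold pr
  exact Finset.sum_congr rfl fun ω _ => by rw [if_congr (h ω) rfl rfl]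

lemma pr_fiber {𝒴 : Type*} [Fintype 𝒴] (Y : Ω → 𝒴) (E : Ω → Prop) :
    pr p E = ∑ y, pr p (fun ω => Y ω = y ∧ E ω) := by
  classical
  unfold pr
  rw [Finset.sum_comm]
  refine Finset.sum_congr rfl fun ω _ => ?_
  by_cases hE : E ω
  · simp [hE]
  · simp [hE]

lemma alg (A B C D : ℝ) (hB : 0 ≤ B) (hBA : B ≤ A) (hAC : A ≤ C) (hBD : B ≤ D)
    (hD : 0 ≤ D) :
    A * ((B / A - D / C) ^ 2 / (D / C)) = C * B ^ 2 / (D * A) - 2 * B + A * D / C := by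
  rcases eq_or_lt_of_le (hB.trans hBA) with hA | hA
  · have hB0 : B = 0 := le_antisymm (hA ▸ hBA) hB
    simp [← hA, hB0]
  · have hC : (0 : ℝ) < C := hA.trans_le hAC
    rcases eq_or_lt_of_le hD with hD0 | hD0
    · have hB0 : B = 0 := le_antisymm (hD0 ▸ hBD) hB
      simp [hB0, ← hD0]
    · field_simp
      ring

end helpers

section cmi

variable {Ω 𝒳 𝒴 𝒵 : Type*} [Fintype Ω] [Fintype 𝒳] [Fintype 𝒴] [Fintype 𝒵]

lemma term_eq (p : Ω → ℝ) (hp : ∀ ω, 0 ≤ p ω) (X : Ω → 𝒳) (Y : Ω → 𝒴) (Z : Ω → 𝒵)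
    (x : 𝒳) (z : 𝒵) :
    pr p (fun ω => X ω = x ∧ Z ω = z) *
      chiSqDiv (condDist p Y (fun ω => X ω = x ∧ Z ω = z))
        (condDist p Y (fun ω => X ω = x))
    = ∑ y, (pr p (fun ω => X ω = x) * pr p (fun ω => Y ω = y ∧ X ω = x ∧ Z ω = z) ^ 2 /
        (pr p (fun ω => Y ω = y ∧ X ω = x) * pr p (fun ω => X ω = x ∧ Z ω = z))
        - 2 * pr p (fun ω => Y ω = y ∧ X ω = x ∧ Z ω = z)
        + pr p (fun ω => X ω = x ∧ Z ω = z) * pr p (fun ω => Y ω = y ∧ X ω = x) /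
            pr p (fun ω => X ω = x)) := by
  unfold chiSqDiv condDist
  rw [Finset.mul_sum]
  refine Finset.sum_congr rfl fun y _ => ?_
  exact alg _ _ _ _ (pr_nonneg hp _)
    (pr_mono hp fun ω h => h.2)
    (pr_mono hp fun ω h => h.1)
    (pr_mono hp fun ω h => ⟨h.1, h.2.1⟩)
    (pr_nonneg hp _)

lemma cmi_eq (p : Ω → ℝ) (hp : ∀ ω, 0 ≤ p ω) (X : Ω → 𝒳) (Y : Ω → 𝒴) (Z : Ω → 𝒵) :
    chiSqCMI p Y Z X
    = ∑ x, ((∑ z, ∑ y, pr p (fun ω => X ω = x) *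
        pr p (fun ω => Y ω = y ∧ X ω = x ∧ Z ω = z) ^ 2 /
        (pr p (fun ω => Y ω = y ∧ X ω = x) * pr p (fun ω => X ω = x ∧ Z ω = z)))
        - pr p (fun ω => X ω = x)) := by
  unfold chiSqCMI
  refine Finset.sum_congr rfl fun x _ => ?_
  have hZ : ∑ z, pr p (fun ω => X ω = x ∧ Z ω = z) = pr p (fun ω => X ω = x) := by
    rw [pr_fiber Z (fun ω => X ω = x)]
    exact Finset.sum_congr rfl fun z _ => pr_congr fun ω => and_comm
  have hsum2 : ∀ z, ∑ y, pr p (fun ω => Y ω = y ∧ X ω = x ∧ Z ω = z)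
      = pr p (fun ω => X ω = x ∧ Z ω = z) := fun z =>
    (pr_fiber Y (fun ω => X ω = x ∧ Z ω = z)).symm
  have hY : ∑ y, pr p (fun ω => Y ω = y ∧ X ω = x) = pr p (fun ω => X ω = x) :=
    (pr_fiber Y (fun ω => X ω = x)).symm
  calc ∑ z, pr p (fun ω => X ω = x ∧ Z ω = z) *
      chiSqDiv (condDist p Y (fun ω => X ω = x ∧ Z ω = z))
        (condDist p Y (fun ω => X ω = x))
      = ∑ z, ∑ y, (pr p (fun ω => X ω = x) *
          pr p (fun ω => Y ω = y ∧ X ω = x ∧ Z ω = z) ^ 2 /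
          (pr p (fun ω => Y ω = y ∧ X ω = x) * pr p (fun ω => X ω = x ∧ Z ω = z))
          - 2 * pr p (fun ω => Y ω = y ∧ X ω = x ∧ Z ω = z)
          + pr p (fun ω => X ω = x ∧ Z ω = z) * pr p (fun ω => Y ω = y ∧ X ω = x) /
              pr p (fun ω => X ω = x)) :=
        Finset.sum_congr rfl fun z _ => term_eq p hp X Y Z x z
    _ = (∑ z, ∑ y, pr p (fun ω => X ω = x) *
          pr p (fun ω => Y ω = y ∧ X ω = x ∧ Z ω = z) ^ 2 /
          (pr p (fun ω => Y ω = y ∧ X ω = x) * pr p (fun ω => X ω = x ∧ Z ω = z)))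
        - (∑ z, ∑ y, 2 * pr p (fun ω => Y ω = y ∧ X ω = x ∧ Z ω = z))
        + ∑ z, ∑ y, pr p (fun ω => X ω = x ∧ Z ω = z) *
            pr p (fun ω => Y ω = y ∧ X ω = x) / pr p (fun ω => X ω = x) := by
        simp [Finset.sum_add_distrib, Finset.sum_sub_distrib]
    _ = _ := by
        have h2 : ∑ z, ∑ y, 2 * pr p (fun ω => Y ω = y ∧ X ω = x ∧ Z ω = z)
            = 2 * pr p (fun ω => X ω = x) := by
          rw [← hZ, Finset.mul_sum]
          refine Finset.sum_congr rfl fun z _ => ?_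
          rw [← Finset.mul_sum, hsum2 z]
        have h3 : ∑ z, ∑ y, pr p (fun ω => X ω = x ∧ Z ω = z) *
            pr p (fun ω => Y ω = y ∧ X ω = x) / pr p (fun ω => X ω = x)
            = pr p (fun ω => X ω = x) := by
          have : ∀ z, ∑ y, pr p (fun ω => X ω = x ∧ Z ω = z) *
              pr p (fun ω => Y ω = y ∧ X ω = x) / pr p (fun ω => X ω = x)
              = pr p (fun ω => X ω = x ∧ Z ω = z) * pr p (fun ω => X ω = x) /
                  pr p (fun ω => X ω = x) := by
            intro z
            rw [← Finset.sum_div, ← Finset.mul_sum, hY]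
          rw [Finset.sum_congr rfl fun z _ => this z]
          by_cases hC : pr p (fun ω => X ω = x) = 0
          · rw [← hZ]
            refine Finset.sum_congr rfl fun z _ => ?_
            have hA0 : pr p (fun ω => X ω = x ∧ Z ω = z) = 0 :=
              le_antisymm (hC ▸ pr_mono hp fun ω h => h.1) (pr_nonneg hp _)
            simp [hA0, hC]
          · have : ∀ z, pr p (fun ω => X ω = x ∧ Z ω = z) * pr p (fun ω => X ω = x) /
                pr p (fun ω => X ω = x) = pr p (fun ω => X ω = x ∧ Z ω = z) := fun z => by
              field_simp
            rw [Finset.sum_congr rfl fun z _ => this z, hZ]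
        rw [h2, h3]
        ring

end cmi

/-- The χ²-conditional mutual information is symmetric in its
first and third arguments: `I_{χ²}(Y;Z|X) = I_{χ²}(Z;Y|X)`. -/
theorem chiSqCMI_symm {Ω 𝒳 𝒴 𝒵 : Type*} [Fintype Ω] [Fintype 𝒳] [Fintype 𝒴] [Fintype 𝒵]
    (p : Ω → ℝ) (hp : ∀ ω, 0 ≤ p ω) (hsum : ∑ ω, p ω = 1)
    (X : Ω → 𝒳) (Y : Ω → 𝒴) (Z : Ω → 𝒵) :
    chiSqCMI p Y Z X = chiSqCMI p Z Y X := by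
  rw [cmi_eq p hp X Y Z, cmi_eq p hp X Z Y]
  refine Finset.sum_congr rfl fun x _ => ?_
  congr 1
  rw [Finset.sum_comm]
  refine Finset.sum_congr rfl fun y _ => Finset.sum_congr rfl fun z _ => ?_
  rw [pr_congr (p := p) (E := fun ω => Z ω = z ∧ X ω = x ∧ Y ω = y)
      (F := fun ω => Y ω = y ∧ X ω = x ∧ Z ω = z) (fun ω => by tauto),
    pr_congr (p := p) (E := fun ω => Z ω = z ∧ X ω = x)
      (F := fun ω => X ω = x ∧ Z ω = z) (fun ω => by tauto),
    pr_congr (p := p) (E := fun ω => X ω = x ∧ Y ω = y)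
      (F := fun ω => Y ω = y ∧ X ω = x) (fun ω => by tauto),
    mul_comm (pr p fun ω => X ω = x ∧ Z ω = z)]
end

section
/- Let P and Q be probability mass functions on a finite set 𝒴 with P(y) = 0 whenever Q(y) = 0, and suppose the loss function satisfies |L(y,a)| ≤ M for all y ∈ 𝒴 and a ∈ 𝒜. If D_{χ²}(P||Q) ≤ β² for some β ≥ 0, then for any choice of Bayes actions, D_L(P||Q) ≤ 2Mβ. -/
open Finset

/-- Expected loss `E_{Y∼P}[L(Y,a)]`. -/
noncomputable def expLoss {𝒴 𝒜 : Type*} [Fintype 𝒴] (L : 𝒴 → 𝒜 → ℝ) (P : 𝒴 → ℝ)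
    (a : 𝒜) : ℝ :=
  ∑ y, P y * L y a

/-- If `|L(y,a)| ≤ M` and `D_{χ²}(P‖Q) ≤ β²`, then for any
choice of Bayes actions `a_P, a_Q`, the `L`-divergence
`D_L(P‖Q) = E_P[L(·,a_Q)] − E_P[L(·,a_P)]` is at most `2Mβ`. -/
theorem Ldiv_le_of_chiSqDiv_le {𝒴 𝒜 : Type*} [Fintype 𝒴]
    (L : 𝒴 → 𝒜 → ℝ) (M : ℝ) (hL : ∀ y a, |L y a| ≤ M)
    (P Q : 𝒴 → ℝ) (hP : ∀ y, 0 ≤ P y) (hQ : ∀ y, 0 ≤ Q y)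
    (hPsum : ∑ y, P y = 1) (hQsum : ∑ y, Q y = 1)
    (hac : ∀ y, Q y = 0 → P y = 0)
    (β : ℝ) (hβ : 0 ≤ β) (hchi : chiSqDiv P Q ≤ β ^ 2)
    (aP aQ : 𝒜)
    (haP : ∀ a, expLoss L P aP ≤ expLoss L P a)
    (haQ : ∀ a, expLoss L Q aQ ≤ expLoss L Q a) :
    expLoss L P aQ - expLoss L P aP ≤ 2 * M * β := by
  classical
  -- 𝒴 is nonempty since ∑ P = 1
  have h𝒴 : Nonempty 𝒴 := by
    by_contra h
    simp only [not_nonempty_iff] at h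
    rw [Finset.sum_eq_zero (fun y _ => (h.false y).elim)] at hPsum
    norm_num at hPsum
  obtain ⟨y0⟩ := h𝒴
  have hM : 0 ≤ M := le_trans (abs_nonneg _) (hL y0 aP)
  set f : 𝒴 → ℝ := fun y => L y aQ - L y aP with hf
  have hfbd : ∀ y, |f y| ≤ 2 * M := by
    intro y
    calc |f y| ≤ |L y aQ| + |L y aP| := abs_sub _ _
      _ ≤ M + M := add_le_add (hL y aQ) (hL y aP)
      _ = 2 * M := by ring
  -- step 1: D_L ≤ ∑ (P-Q) f
  have step1 : expLoss L P aQ - expLoss L P aP ≤ ∑ y, (P y - Q y) * f y := by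
    have h1 : expLoss L Q aQ ≤ expLoss L Q aP := haQ aP
    have : ∑ y, (P y - Q y) * f y =
        (expLoss L P aQ - expLoss L P aP) - (expLoss L Q aQ - expLoss L Q aP) := by
      simp only [expLoss, hf]
      rw [← Finset.sum_sub_distrib, ← Finset.sum_sub_distrib, ← Finset.sum_sub_distrib]
      apply Finset.sum_congr rfl
      intro y _
      ring
    linarith
  -- Cauchy–Schwarz
  set g : 𝒴 → ℝ := fun y => if Q y = 0 then 0 else (P y - Q y) / Real.sqrt (Q y) with hg
  set h : 𝒴 → ℝ := fun y => Real.sqrt (Q y) * f y with hh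
  have hprod : ∀ y, (P y - Q y) * f y = g y * h y := by
    intro y
    simp only [hg, hh]
    by_cases hy : Q y = 0
    · simp [hy, hac y hy]
    · have hQy : 0 < Q y := lt_of_le_of_ne (hQ y) (Ne.symm hy)
      rw [if_neg hy]
      field_simp
  have hg2 : ∑ y, g y ^ 2 = chiSqDiv P Q := by
    unfold chiSqDiv
    apply Finset.sum_congr rfl
    intro y _
    simp only [hg]
    by_cases hy : Q y = 0
    · simp [hy, hac y hy]
    · have hQy : 0 < Q y := lt_of_le_of_ne (hQ y) (Ne.symm hy)
      rw [if_neg hy, div_pow, Real.sq_sqrt (hQ y)]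
  have hh2 : ∑ y, h y ^ 2 ≤ (2 * M) ^ 2 := by
    have : ∀ y ∈ Finset.univ, h y ^ 2 ≤ Q y * (2 * M) ^ 2 := by
      intro y _
      simp only [hh, mul_pow, Real.sq_sqrt (hQ y)]
      apply mul_le_mul_of_nonneg_left _ (hQ y)
      nlinarith [hfbd y, abs_nonneg (f y), sq_abs (f y)]
    calc ∑ y, h y ^ 2 ≤ ∑ y, Q y * (2 * M) ^ 2 := Finset.sum_le_sum this
      _ = (2 * M) ^ 2 := by rw [← Finset.sum_mul, hQsum, one_mul]
  have hCS : (∑ y, g y * h y) ^ 2 ≤ (∑ y, g y ^ 2) * ∑ y, h y ^ 2 :=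
    Finset.sum_mul_sq_le_sq_mul_sq Finset.univ g h
  have hb : (∑ y, (P y - Q y) * f y) ^ 2 ≤ (2 * M * β) ^ 2 := by
    rw [Finset.sum_congr rfl (fun y _ => hprod y)]
    calc (∑ y, g y * h y) ^ 2 ≤ (∑ y, g y ^ 2) * ∑ y, h y ^ 2 := hCS
      _ ≤ β ^ 2 * (2 * M) ^ 2 := by
          apply mul_le_mul (hg2 ▸ hchi) hh2
            (Finset.sum_nonneg fun y _ => sq_nonneg _) (sq_nonneg _)
      _ = (2 * M * β) ^ 2 := by ring
  have hfin : ∑ y, (P y - Q y) * f y ≤ 2 * M * β := by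
    have h2Mβ : 0 ≤ 2 * M * β := by positivity
    nlinarith [hb]
  linarith [step1, hfin]
end

section
/- (Theorem 1, quantitative ε-Markov version.) Let Y and X_0, X_1, …, X_n be jointly distributed random variables, with each X_k taking values in a common finite set 𝒳, and suppose the loss function satisfies |L(y,a)| ≤ M for all y and a. If I_{χ²}(Y; X_{k+1} | X_k) ≤ ε² for every k < θ, then 0 ≤ g₁(θ) − H_L(Y|X_θ) ≤ 2Mθε·|𝒳|, where g₁(θ) = H_L(Y|X_0) + Σ_{k=0}^{θ−1} I_L(Y; X_k | X_{k+1}). -/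
/-!
By the chain rule `I_L(Y;Z|X) = H_L(Y|X) - H_L(Y|X,Z)` and the symmetry of `H_L(Y|X,Z)` in
`X, Z`, `I_L(Y;X_k|X_{k+1}) - I_L(Y;X_{k+1}|X_k) = H_L(Y|X_{k+1}) - H_L(Y|X_k)`, so
`g₁(θ) - H_L(Y|X_θ)` telescopes to `∑_{k<θ} I_L(Y;X_{k+1}|X_k) ≥ 0`.

Each of these terms is at most `2Mε`. Since `b Q` is optimal for `Q`,
`D_L(P‖Q) ≤ ∑_y (P y - Q y) (L(y, b Q) - L(y, b P)) ≤ 2M ‖P - Q‖₁ ≤ 2M √(D_{χ²}(P‖Q))`,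
and concavity of `√` carries this bound through the average over the cells `(x, z)`.
-/

open Finset

/-- The `L`-entropy `H_L(P) = min_{a∈𝒜} E_{Y∼P}[L(Y,a)]`. -/
noncomputable def Lentropy {𝒴 𝒜 : Type*} [Fintype 𝒴] (L : 𝒴 → 𝒜 → ℝ) (P : 𝒴 → ℝ) : ℝ :=
  ⨅ a : 𝒜, expLoss L P a

/-- The `L`-conditional entropy `H_L(Y|X) = Σ_x P_X(x) H_L(P_{Y|X=x})`. -/
noncomputable def LcondEntropy {Ω 𝒳 𝒴 𝒜 : Type*} [Fintype Ω] [Fintype 𝒳] [Fintype 𝒴]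
    (L : 𝒴 → 𝒜 → ℝ) (p : Ω → ℝ) (Y : Ω → 𝒴) (X : Ω → 𝒳) : ℝ :=
  ∑ x, pr p (fun ω => X ω = x) * Lentropy L (condDist p Y (fun ω => X ω = x))

/-- `b` selects, for every probability mass function `P` on `𝒴`, a Bayes action `b P`. -/
def IsBayesSelector {𝒴 𝒜 : Type*} [Fintype 𝒴] (L : 𝒴 → 𝒜 → ℝ) (b : (𝒴 → ℝ) → 𝒜) : Prop :=
  ∀ P : 𝒴 → ℝ, (∀ y, 0 ≤ P y) → (∑ y, P y) = 1 →
    ∀ a : 𝒜, expLoss L P (b P) ≤ expLoss L P a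

/-- The `L`-divergence `D_L(P‖Q) = E_{Y∼P}[L(Y,a_Q)] − E_{Y∼P}[L(Y,a_P)]`
for the choice `a_P = b P`, `a_Q = b Q` of Bayes actions. -/
noncomputable def Ldiv {𝒴 𝒜 : Type*} [Fintype 𝒴] (L : 𝒴 → 𝒜 → ℝ) (b : (𝒴 → ℝ) → 𝒜)
    (P Q : 𝒴 → ℝ) : ℝ :=
  expLoss L P (b Q) - expLoss L P (b P)

/-- The `L`-conditional mutual information
`I_L(Y;Z|X) = Σ_{x,z} P_{X,Z}(x,z) D_L(P_{Y|X=x,Z=z} ‖ P_{Y|X=x})`. -/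
noncomputable def LCMI {Ω 𝒳 𝒴 𝒵 𝒜 : Type*} [Fintype Ω] [Fintype 𝒳] [Fintype 𝒴]
    [Fintype 𝒵] (L : 𝒴 → 𝒜 → ℝ) (b : (𝒴 → ℝ) → 𝒜) (p : Ω → ℝ)
    (Y : Ω → 𝒴) (Z : Ω → 𝒵) (X : Ω → 𝒳) : ℝ :=
  ∑ x, ∑ z, pr p (fun ω => X ω = x ∧ Z ω = z) *
    Ldiv L b (condDist p Y (fun ω => X ω = x ∧ Z ω = z))
      (condDist p Y (fun ω => X ω = x))

section Probability

variable {Ω : Type*} [Fintype Ω] {p : Ω → ℝ}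

lemma pr_eq_zero_of_imp (hp : ∀ ω, 0 ≤ p ω) {E F : Ω → Prop} (h : ∀ ω, E ω → F ω)
    (hF : pr p F = 0) : pr p E = 0 :=
  le_antisymm (hF ▸ pr_mono hp h) (pr_nonneg hp E)

lemma sum_pr_and_eq {𝒵 : Type*} [Fintype 𝒵] (p : Ω → ℝ) (E : Ω → Prop) (Z : Ω → 𝒵) :
    ∑ z, pr p (fun ω => E ω ∧ Z ω = z) = pr p E := by
  classical
  unfold pr
  rw [sum_comm]
  refine sum_congr rfl fun ω _ => ?_
  by_cases hE : E ω <;> simp [hE]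

lemma sum_pr_eq {𝒳 : Type*} [Fintype 𝒳] (p : Ω → ℝ) (X : Ω → 𝒳) :
    ∑ x, pr p (fun ω => X ω = x) = ∑ ω, p ω := by
  classical
  unfold pr
  rw [sum_comm]
  simp

lemma pr_mul_condDist {𝒴 : Type*} (hp : ∀ ω, 0 ≤ p ω) (Y : Ω → 𝒴) (E : Ω → Prop) (y : 𝒴) :
    pr p E * condDist p Y E y = pr p (fun ω => Y ω = y ∧ E ω) := by
  by_cases h : pr p E = 0
  · rw [h, zero_mul, pr_eq_zero_of_imp hp (fun ω h => h.2) h]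
  · exact mul_div_cancel₀ _ h

lemma condDist_nonneg {𝒴 : Type*} (hp : ∀ ω, 0 ≤ p ω) (Y : Ω → 𝒴) (E : Ω → Prop) (y : 𝒴) :
    0 ≤ condDist p Y E y :=
  div_nonneg (pr_nonneg hp _) (pr_nonneg hp _)

lemma sum_condDist {𝒴 : Type*} [Fintype 𝒴] (Y : Ω → 𝒴) {E : Ω → Prop} (h : pr p E ≠ 0) :
    ∑ y, condDist p Y E y = 1 := by
  unfold condDist
  rw [← sum_div, div_eq_one_iff_eq h, ← sum_pr_and_eq p E Y]
  exact sum_congr rfl fun y _ => congrArg (pr p) (funext fun ω => propext and_comm)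

lemma condDist_eq_zero_of_imp {𝒴 : Type*} (hp : ∀ ω, 0 ≤ p ω) (Y : Ω → 𝒴)
    {E F : Ω → Prop} (h : ∀ ω, E ω → F ω) {y : 𝒴} (hF : condDist p Y F y = 0) :
    condDist p Y E y = 0 := by
  rcases div_eq_zero_iff.1 hF with hyF | hF
  · rw [condDist, pr_eq_zero_of_imp hp (fun ω h' => ⟨h'.1, h ω h'.2⟩) hyF, zero_div]
  · rw [condDist, pr_eq_zero_of_imp hp h hF, div_zero]

end Probability

section Loss

variable {𝒴 𝒜 : Type*} [Fintype 𝒴] {L : 𝒴 → 𝒜 → ℝ} {b : (𝒴 → ℝ) → 𝒜}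

lemma Lentropy_eq_expLoss (hb : IsBayesSelector L b) {P : 𝒴 → ℝ} (hP0 : ∀ y, 0 ≤ P y)
    (hP1 : ∑ y, P y = 1) : Lentropy L P = expLoss L P (b P) :=
  have : Nonempty 𝒜 := ⟨b P⟩
  IsGLB.ciInf_eq (IsLeast.isGLB ⟨⟨b P, rfl⟩, Set.forall_mem_range.2 (hb P hP0 hP1)⟩)

lemma Ldiv_nonneg (hb : IsBayesSelector L b) {P : 𝒴 → ℝ} (hP0 : ∀ y, 0 ≤ P y)
    (hP1 : ∑ y, P y = 1) (Q : 𝒴 → ℝ) : 0 ≤ Ldiv L b P Q :=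
  sub_nonneg.2 (hb P hP0 hP1 (b Q))

lemma Ldiv_le_two_mul_sum_abs_sub {M : ℝ} (hL : ∀ y a, |L y a| ≤ M)
    (hb : IsBayesSelector L b) (P : 𝒴 → ℝ) {Q : 𝒴 → ℝ} (hQ0 : ∀ y, 0 ≤ Q y)
    (hQ1 : ∑ y, Q y = 1) : Ldiv L b P Q ≤ 2 * M * ∑ y, |P y - Q y| := by
  have hQopt := hb Q hQ0 hQ1 (b P)
  have hexpand : ∑ y, (P y - Q y) * (L y (b Q) - L y (b P)) =
      Ldiv L b P Q - (expLoss L Q (b Q) - expLoss L Q (b P)) := by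
    simp only [Ldiv, expLoss, ← sum_sub_distrib]
    exact sum_congr rfl fun y _ => by ring
  have hterm : ∀ y, (P y - Q y) * (L y (b Q) - L y (b P)) ≤ 2 * M * |P y - Q y| := fun y =>
    calc (P y - Q y) * (L y (b Q) - L y (b P))
        ≤ |P y - Q y| * |L y (b Q) - L y (b P)| := (le_abs_self _).trans (abs_mul _ _).le
      _ ≤ |P y - Q y| * (2 * M) := by
          gcongr
          linarith [abs_sub (L y (b Q)) (L y (b P)), hL y (b Q), hL y (b P)]
      _ = 2 * M * |P y - Q y| := mul_comm _ _
  rw [mul_sum]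
  linarith [sum_le_sum fun y (_ : y ∈ univ) => hterm y]

end Loss

lemma sum_mul_sqrt_le_sqrt_sum_mul {ι : Type*} (s : Finset ι) {w c : ι → ℝ}
    (hw : ∀ i ∈ s, 0 ≤ w i) (hw1 : ∑ i ∈ s, w i = 1) (hc : ∀ i ∈ s, 0 ≤ c i) :
    ∑ i ∈ s, w i * √(c i) ≤ √(∑ i ∈ s, w i * c i) := by
  simpa only [smul_eq_mul] using Real.strictConcaveOn_sqrt.concaveOn.le_map_sum hw hw1 hc

lemma sum_abs_sub_le_sqrt_chiSqDiv {𝒴 : Type*} [Fintype 𝒴] {P Q : 𝒴 → ℝ}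
    (hQ0 : ∀ y, 0 ≤ Q y) (hQ1 : ∑ y, Q y = 1) (hPQ : ∀ y, Q y = 0 → P y = 0) :
    ∑ y, |P y - Q y| ≤ √(chiSqDiv P Q) := by
  have hweight : ∀ y, Q y * √(((P y - Q y) / Q y) ^ 2) = |P y - Q y| := fun y => by
    rcases (hQ0 y).eq_or_lt with h | h
    · simp [← h, hPQ y h.symm]
    · rw [Real.sqrt_sq_eq_abs, abs_div, abs_of_pos h, mul_div_cancel₀ _ h.ne']
  have hchi : ∀ y, Q y * ((P y - Q y) / Q y) ^ 2 = (P y - Q y) ^ 2 / Q y := fun y => by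
    rcases (hQ0 y).eq_or_lt with h | h
    · simp [← h]
    · field_simp
  simpa only [hweight, hchi, chiSqDiv] using
    sum_mul_sqrt_le_sqrt_sum_mul univ (c := fun y => ((P y - Q y) / Q y) ^ 2)
      (fun y _ => hQ0 y) hQ1 (fun y _ => sq_nonneg _)

section ConditionalEntropy

variable {Ω 𝒳 𝒴 𝒵 𝒜 : Type*} [Fintype Ω] [Fintype 𝒳] [Fintype 𝒴] [Fintype 𝒵]
  {L : 𝒴 → 𝒜 → ℝ} {b : (𝒴 → ℝ) → 𝒜} {p : Ω → ℝ}

lemma pr_mul_Lentropy (hb : IsBayesSelector L b) (hp : ∀ ω, 0 ≤ p ω) (Y : Ω → 𝒴)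
    (E : Ω → Prop) :
    pr p E * Lentropy L (condDist p Y E) =
      pr p E * expLoss L (condDist p Y E) (b (condDist p Y E)) := by
  by_cases h : pr p E = 0
  · rw [h, zero_mul, zero_mul]
  · rw [Lentropy_eq_expLoss hb (condDist_nonneg hp Y E) (sum_condDist Y h)]

lemma sum_pr_mul_expLoss_and_eq (hp : ∀ ω, 0 ≤ p ω) (Y : Ω → 𝒴) (E : Ω → Prop)
    (Z : Ω → 𝒵) (a : 𝒜) :
    ∑ z, pr p (fun ω => E ω ∧ Z ω = z) * expLoss L (condDist p Y (fun ω => E ω ∧ Z ω = z)) a =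
      pr p E * expLoss L (condDist p Y E) a := by
  simp only [expLoss, mul_sum, ← mul_assoc, pr_mul_condDist hp]
  rw [sum_comm]
  refine sum_congr rfl fun y _ => ?_
  rw [← sum_mul, ← sum_pr_and_eq p (fun ω => Y ω = y ∧ E ω) Z]
  simp only [and_assoc]

lemma LcondEntropy_equiv_comp {𝒳' : Type*} [Fintype 𝒳'] (e : 𝒳 ≃ 𝒳') (L : 𝒴 → 𝒜 → ℝ)
    (p : Ω → ℝ) (Y : Ω → 𝒴) (X : Ω → 𝒳) :
    LcondEntropy L p Y (fun ω => e (X ω)) = LcondEntropy L p Y X :=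
  (Fintype.sum_equiv e _ _ fun x => by simp only [e.apply_eq_iff_eq]).symm

lemma LcondEntropy_prod (L : 𝒴 → 𝒜 → ℝ) (p : Ω → ℝ) (Y : Ω → 𝒴) (X : Ω → 𝒳) (Z : Ω → 𝒵) :
    LcondEntropy L p Y (fun ω => (X ω, Z ω)) =
      ∑ x, ∑ z, pr p (fun ω => X ω = x ∧ Z ω = z) *
        Lentropy L (condDist p Y (fun ω => X ω = x ∧ Z ω = z)) := by
  simp only [LcondEntropy, Fintype.sum_prod_type, Prod.mk.injEq]

lemma LCMI_eq_sub (hb : IsBayesSelector L b) (hp : ∀ ω, 0 ≤ p ω) (Y : Ω → 𝒴) (Z : Ω → 𝒵)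
    (X : Ω → 𝒳) :
    LCMI L b p Y Z X =
      LcondEntropy L p Y X - LcondEntropy L p Y (fun ω => (X ω, Z ω)) := by
  rw [LcondEntropy_prod]
  simp only [LCMI, LcondEntropy, Ldiv, pr_mul_Lentropy hb hp, mul_sub,
    sum_sub_distrib, sum_pr_mul_expLoss_and_eq hp Y (fun ω => X _ = _) Z]

lemma LCMI_sub_LCMI_swap (hb : IsBayesSelector L b) (hp : ∀ ω, 0 ≤ p ω) (Y : Ω → 𝒴)
    (Z : Ω → 𝒵) (X : Ω → 𝒳) :
    LCMI L b p Y Z X - LCMI L b p Y X Z = LcondEntropy L p Y X - LcondEntropy L p Y Z := by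
  have hcomm : LcondEntropy L p Y (fun ω => (Z ω, X ω)) =
      LcondEntropy L p Y (fun ω => (X ω, Z ω)) := by
    simpa only [Equiv.prodComm_apply, Prod.swap_prod_mk] using
      LcondEntropy_equiv_comp (Equiv.prodComm 𝒳 𝒵) L p Y fun ω => (X ω, Z ω)
  rw [LCMI_eq_sub hb hp, LCMI_eq_sub hb hp, hcomm]
  ring

lemma LCMI_nonneg (hb : IsBayesSelector L b) (hp : ∀ ω, 0 ≤ p ω) (Y : Ω → 𝒴) (Z : Ω → 𝒵)
    (X : Ω → 𝒳) : 0 ≤ LCMI L b p Y Z X := by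
  refine sum_nonneg fun x _ => sum_nonneg fun z _ => ?_
  by_cases h : pr p (fun ω => X ω = x ∧ Z ω = z) = 0
  · rw [h, zero_mul]
  · exact mul_nonneg (pr_nonneg hp _)
      (Ldiv_nonneg hb (condDist_nonneg hp Y _) (sum_condDist Y h) _)

lemma LCMI_le_two_mul_sqrt_chiSqCMI {M : ℝ} (hL : ∀ y a, |L y a| ≤ M) (hM : 0 ≤ M)
    (hb : IsBayesSelector L b) (hp : ∀ ω, 0 ≤ p ω) (hsum : ∑ ω, p ω = 1) (Y : Ω → 𝒴)
    (Z : Ω → 𝒵) (X : Ω → 𝒳) :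
    LCMI L b p Y Z X ≤ 2 * M * √(chiSqCMI p Y Z X) := by
  set w : 𝒳 × 𝒵 → ℝ := fun q => pr p (fun ω => X ω = q.1 ∧ Z ω = q.2)
  set P : 𝒳 × 𝒵 → 𝒴 → ℝ := fun q => condDist p Y (fun ω => X ω = q.1 ∧ Z ω = q.2)
  set Q : 𝒳 → 𝒴 → ℝ := fun x => condDist p Y (fun ω => X ω = x)
  have hw0 : ∀ q, 0 ≤ w q := fun q => pr_nonneg hp _
  have hw1 : ∑ q, w q = 1 := by
    rw [Fintype.sum_prod_type]
    simp only [w, sum_pr_and_eq p (fun ω => X ω = _) Z, sum_pr_eq, hsum]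
  have hcell : ∀ q, w q * Ldiv L b (P q) (Q q.1) ≤ 2 * M * (w q * √(chiSqDiv (P q) (Q q.1))) := by
    intro q
    by_cases h : w q = 0
    · simp [h]
    have hx : pr p (fun ω => X ω = q.1) ≠ 0 :=
      fun h0 => h (pr_eq_zero_of_imp hp (fun ω h' => h'.1) h0)
    rw [mul_left_comm]
    refine mul_le_mul_of_nonneg_left ?_ (hw0 q)
    refine (Ldiv_le_two_mul_sum_abs_sub hL hb _ (condDist_nonneg hp Y _)
      (sum_condDist Y hx)).trans ?_
    gcongr
    exact sum_abs_sub_le_sqrt_chiSqDiv (condDist_nonneg hp Y _) (sum_condDist Y hx)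
      fun y => condDist_eq_zero_of_imp hp Y (fun ω h' => h'.1)
  calc LCMI L b p Y Z X = ∑ q, w q * Ldiv L b (P q) (Q q.1) := (Fintype.sum_prod_type' _).symm
    _ ≤ ∑ q, 2 * M * (w q * √(chiSqDiv (P q) (Q q.1))) := sum_le_sum fun q _ => hcell q
    _ = 2 * M * ∑ q, w q * √(chiSqDiv (P q) (Q q.1)) := (mul_sum _ _ _).symm
    _ ≤ 2 * M * √(∑ q, w q * chiSqDiv (P q) (Q q.1)) := by
        gcongr
        exact sum_mul_sqrt_le_sqrt_sum_mul univ (fun q _ => hw0 q) hw1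
          fun q _ => sum_nonneg fun y _ => div_nonneg (sq_nonneg _) (condDist_nonneg hp Y _ y)
    _ = 2 * M * √(chiSqCMI p Y Z X) := by
        rw [Fintype.sum_prod_type' fun x z => w (x, z) * chiSqDiv (P (x, z)) (Q x)]
        rfl

end ConditionalEntropy

lemma LcondEntropy_add_sum_LCMI_sub {Ω 𝒳 𝒴 𝒜 : Type*} [Fintype Ω] [Fintype 𝒳] [Fintype 𝒴]
    {L : 𝒴 → 𝒜 → ℝ} {b : (𝒴 → ℝ) → 𝒜} (hb : IsBayesSelector L b) {p : Ω → ℝ}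
    (hp : ∀ ω, 0 ≤ p ω) (Y : Ω → 𝒴) (X : ℕ → Ω → 𝒳) (θ : ℕ) :
    LcondEntropy L p Y (X 0) + ∑ k ∈ range θ, LCMI L b p Y (X k) (X (k + 1))
        - LcondEntropy L p Y (X θ) =
      ∑ k ∈ range θ, LCMI L b p Y (X (k + 1)) (X k) := by
  have hswap : ∀ k, LCMI L b p Y (X k) (X (k + 1)) = LCMI L b p Y (X (k + 1)) (X k) +
      (LcondEntropy L p Y (X (k + 1)) - LcondEntropy L p Y (X k)) := fun k =>
    eq_add_of_sub_eq' (LCMI_sub_LCMI_swap hb hp Y (X k) (X (k + 1)))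
  simp only [hswap, sum_add_distrib, sum_range_sub (fun k => LcondEntropy L p Y (X k))]
  ring

theorem condEntropy_epsMarkov_approx_general {Ω 𝒳 𝒴 𝒜 : Type*} [Fintype Ω] [Fintype 𝒳]
    [Fintype 𝒴]
    (L : 𝒴 → 𝒜 → ℝ) (M : ℝ) (hL : ∀ y a, |L y a| ≤ M)
    (b : (𝒴 → ℝ) → 𝒜) (hb : IsBayesSelector L b)
    (p : Ω → ℝ) (hp : ∀ ω, 0 ≤ p ω) (hsum : ∑ ω, p ω = 1)
    (Y : Ω → 𝒴) (X : ℕ → Ω → 𝒳)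
    (ε : ℝ) (hε : 0 ≤ ε) (θ : ℕ)
    (hMarkov : ∀ k < θ, chiSqCMI p Y (X (k + 1)) (X k) ≤ ε ^ 2) :
    0 ≤ (LcondEntropy L p Y (X 0)
          + ∑ k ∈ Finset.range θ, LCMI L b p Y (X k) (X (k + 1)))
        - LcondEntropy L p Y (X θ)
    ∧ (LcondEntropy L p Y (X 0)
          + ∑ k ∈ Finset.range θ, LCMI L b p Y (X k) (X (k + 1)))
        - LcondEntropy L p Y (X θ)
      ≤ 2 * M * (θ : ℝ) * ε * (Fintype.card 𝒳 : ℝ) := by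
  obtain ⟨ω₀, -, -⟩ := exists_ne_zero_of_sum_ne_zero (hsum ▸ one_ne_zero : ∑ ω, p ω ≠ 0)
  have hM : 0 ≤ M := (abs_nonneg _).trans (hL (Y ω₀) (b 0))
  have hcard : (1 : ℝ) ≤ Fintype.card 𝒳 := Nat.one_le_cast.2 (Fintype.card_pos_iff.2 ⟨X 0 ω₀⟩)
  have hterm : ∀ k < θ, LCMI L b p Y (X (k + 1)) (X k) ≤ 2 * M * ε := fun k hk =>
    calc LCMI L b p Y (X (k + 1)) (X k) ≤ 2 * M * √(chiSqCMI p Y (X (k + 1)) (X k)) :=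
          LCMI_le_two_mul_sqrt_chiSqCMI hL hM hb hp hsum Y _ _
      _ ≤ 2 * M * ε := by
          gcongr
          exact Real.sqrt_le_iff.2 ⟨hε, hMarkov k hk⟩
  rw [LcondEntropy_add_sum_LCMI_sub hb hp]
  refine ⟨sum_nonneg fun k _ => LCMI_nonneg hb hp Y _ _, ?_⟩
  calc ∑ k ∈ range θ, LCMI L b p Y (X (k + 1)) (X k)
      ≤ ∑ _k ∈ range θ, 2 * M * ε := sum_le_sum fun k hk => hterm k (mem_range.1 hk)
    _ = 2 * M * θ * ε := by rw [sum_const, card_range, nsmul_eq_mul]; ring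
    _ ≤ 2 * M * θ * ε * Fintype.card 𝒳 := le_mul_of_one_le_right (by positivity) hcard

/-- Theorem 1, quantitative ε-Markov version.  If
`I_{χ²}(Y;X_{k+1}|X_k) ≤ ε²` for every `k < θ`, then
`0 ≤ g₁(θ) − H_L(Y|X_θ) ≤ 2Mθε|𝒳|` where
`g₁(θ) = H_L(Y|X_0) + Σ_{k<θ} I_L(Y;X_k|X_{k+1})`. -/
theorem condEntropy_epsMarkov_approx {Ω 𝒳 𝒴 𝒜 : Type*} [Fintype Ω] [Fintype 𝒳]
    [Fintype 𝒴] [Fintype 𝒜] [Nonempty 𝒜]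
    (L : 𝒴 → 𝒜 → ℝ) (M : ℝ) (hL : ∀ y a, |L y a| ≤ M)
    (b : (𝒴 → ℝ) → 𝒜) (hb : IsBayesSelector L b)
    (p : Ω → ℝ) (hp : ∀ ω, 0 ≤ p ω) (hsum : ∑ ω, p ω = 1)
    (Y : Ω → 𝒴) (X : ℕ → Ω → 𝒳) (n : ℕ)
    (ε : ℝ) (hε : 0 ≤ ε) (θ : ℕ) (hθ : θ ≤ n)
    (hMarkov : ∀ k < θ, chiSqCMI p Y (X (k + 1)) (X k) ≤ ε ^ 2) :
    0 ≤ (LcondEntropy L p Y (X 0)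
          + ∑ k ∈ Finset.range θ, LCMI L b p Y (X k) (X (k + 1)))
        - LcondEntropy L p Y (X θ)
    ∧ (LcondEntropy L p Y (X 0)
          + ∑ k ∈ Finset.range θ, LCMI L b p Y (X k) (X (k + 1)))
        - LcondEntropy L p Y (X θ)
      ≤ 2 * M * (θ : ℝ) * ε * (Fintype.card 𝒳 : ℝ) :=
  condEntropy_epsMarkov_approx_general L M hL b hb p hp hsum Y X ε hε θ hMarkov
end
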